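/- arXiv:2108.06496 — 2 statements merged into one kernel-verified Lean document; each statement's English description precedes it below -/
import Mathlib

section
/- Let Ω be a cone domain {(r cos θ, r sin θ) : α < θ < β, 0 < r < ∞} with 0 ≤ α < β ≤ 2π, let C₁, C₂ ∈ ℝ with C₂ ≠ 0, and let u(x, y) = (C₁ + C₂ ln r)·(−y, x) where r = √(x² + y²). Then: (1) u extends to a continuous function on the closure of Ω with u → 0 as (x, y) → (0, 0); (2) for every γ ∈ (0, 1), u is locally γ-Hölder continuous on the closure of Ω near the origin; and (3) the gradient ∇u is unbounded on every punctured neighborhood of the origin in Ω (in particular ∂₂u₁(x,y) = −(C₁ + C₂ ln r + C₂ sin²θ) blows up as r → 0). -/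
/-!
In complex notation `u = i v` with `v w = (C₁ + C₂ log |w|) w`. For `|w'| ≤ |w| ≤ 1/2`,
`v w - v w' = (C₁ + C₂ log |w|) (w - w') + C₂ (log |w| - log |w'|) w'`. The second term is at most
`|C₂| |w - w'|` since `log a - log b ≤ (a - b) / b`; the first is `O(|w - w'|^γ)` because
`|w - w'| ≤ 2 |w|` and `|log a| a^(1-γ)` is bounded on `(0, 1]`. So `v` is `γ`-Hölder near `0`,
hence continuous there. The gradient however contains the term `C₂ log r`, which is unbounded.
-/

open Real Set Filter

/-- Partial derivative in the second coordinate direction. -/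
noncomputable def pdy (f : ℝ × ℝ → ℝ) (z : ℝ × ℝ) : ℝ := fderiv ℝ f z (0, 1)

/-- The cone domain `{(r cos θ, r sin θ) : α < θ < β, 0 < r < ∞}`. -/
def coneDomain (α β : ℝ) : Set (ℝ × ℝ) :=
  {z | ∃ r θ : ℝ, 0 < r ∧ α < θ ∧ θ < β ∧ z = (r * cos θ, r * sin θ)}

open Metric Topology
open scoped NNReal

theorem HolderOnWith.of_dist_le {X Y : Type*} [PseudoMetricSpace X] [PseudoMetricSpace Y]
    {C r : ℝ≥0} {f : X → Y} {s : Set X}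
    (h : ∀ x ∈ s, ∀ y ∈ s, dist (f x) (f y) ≤ C * dist x y ^ (r : ℝ)) :
    HolderOnWith C r f s := by
  intro x hx y hy
  rw [edist_dist, edist_dist, ENNReal.ofReal_rpow_of_nonneg dist_nonneg r.coe_nonneg,
    ← ENNReal.ofReal_coe_nnreal, ← ENNReal.ofReal_mul C.coe_nonneg]
  exact ENNReal.ofReal_le_ofReal (h x hx y hy)

theorem abs_log_mul_le_mul_rpow {a d γ : ℝ} (ha : 0 < a) (ha1 : a ≤ 1) (hd : 0 ≤ d)
    (hda : d ≤ 2 * a) (hγ0 : 0 < γ) (hγ1 : γ < 1) :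
    |log a| * d ≤ 2 / (1 - γ) * d ^ γ := by
  set c := 1 - γ
  have hc : 0 < c := sub_pos.2 hγ1
  have hsplit : d = d ^ c * d ^ γ := by
    rw [← rpow_add' hd (by simp [c]), sub_add_cancel, rpow_one]
  have hdc : d ^ c ≤ 2 * a ^ c :=
    calc d ^ c ≤ (2 * a) ^ c := rpow_le_rpow hd hda hc.le
      _ = 2 ^ c * a ^ c := mul_rpow zero_le_two ha.le
      _ ≤ 2 ^ (1 : ℝ) * a ^ c := by
        gcongr
        · exact one_le_two
        · linarith
      _ = 2 * a ^ c := by rw [rpow_one]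
  have hlog : |log a| * a ^ c ≤ 1 / c := by
    have := abs_log_mul_self_rpow_lt a c ha ha1 hc
    rw [abs_mul, abs_of_pos (rpow_pos_of_pos ha c)] at this
    exact this.le
  calc |log a| * d = |log a| * d ^ c * d ^ γ := by rw [mul_assoc, ← hsplit]
    _ ≤ |log a| * (2 * a ^ c) * d ^ γ := by gcongr
    _ = 2 * (|log a| * a ^ c) * d ^ γ := by ring
    _ ≤ 2 * (1 / c) * d ^ γ := by gcongr
    _ = 2 / (1 - γ) * d ^ γ := by ring

theorem tendsto_abs_mul_log_add_nhdsGT_zero {C : ℝ} (hC : C ≠ 0) (c : ℝ) :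
    Tendsto (fun r => |C * log r + c|) (𝓝[>] 0) atTop := by
  have h : Tendsto (fun r => |C| * |log r| - |c|) (𝓝[>] 0) atTop :=
    tendsto_atTop_add_const_right _ _ <|
      (tendsto_abs_atBot_atTop.comp tendsto_log_nhdsGT_zero).const_mul_atTop (abs_pos.2 hC)
  refine tendsto_atTop_mono (fun r => ?_) h
  rw [← abs_mul]
  simpa using abs_sub_abs_le_abs_sub (C * log r) (-c)

section LogRadial

variable {E : Type*} [NormedAddCommGroup E] [NormedSpace ℝ E]

theorem norm_log_norm_sub_log_norm_smul_le {w w' : E} (h : ‖w'‖ ≤ ‖w‖) :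
    ‖(log ‖w‖ - log ‖w'‖) • w'‖ ≤ ‖w - w'‖ := by
  rcases eq_or_ne w' 0 with rfl | hw'
  · simp
  have hb : 0 < ‖w'‖ := norm_pos_iff.2 hw'
  have ha : 0 < ‖w‖ := hb.trans_le h
  have hlog : 0 ≤ log ‖w‖ - log ‖w'‖ := sub_nonneg.2 (log_le_log hb h)
  calc ‖(log ‖w‖ - log ‖w'‖) • w'‖ = (log (‖w‖ / ‖w'‖)) * ‖w'‖ := by
        rw [norm_smul, norm_of_nonneg hlog, log_div ha.ne' hb.ne']
    _ ≤ (‖w‖ / ‖w'‖ - 1) * ‖w'‖ := by gcongr; exact log_le_sub_one_of_pos (div_pos ha hb)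
    _ = ‖w‖ - ‖w'‖ := by field_simp
    _ ≤ ‖w - w'‖ := norm_sub_norm_le w w'

theorem norm_log_norm_smul_sub_le {γ : ℝ} (hγ0 : 0 < γ) (hγ1 : γ < 1) {w w' : E}
    (h : ‖w'‖ ≤ ‖w‖) (hw : ‖w‖ ≤ 1 / 2) :
    ‖log ‖w‖ • w - log ‖w'‖ • w'‖ ≤ (2 / (1 - γ) + 1) * ‖w - w'‖ ^ γ := by
  rcases eq_or_ne w 0 with rfl | hw0
  · rw [norm_zero, norm_le_zero_iff] at h
    simp [h, zero_rpow hγ0.ne']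
  have hd : ‖w - w'‖ ≤ 2 * ‖w‖ := (norm_sub_le w w').trans (by linarith)
  have hd1 : ‖w - w'‖ ≤ 1 := by linarith
  calc ‖log ‖w‖ • w - log ‖w'‖ • w'‖
        = ‖log ‖w‖ • (w - w') + (log ‖w‖ - log ‖w'‖) • w'‖ := by
          rw [smul_sub, sub_smul, sub_add_sub_cancel]
    _ ≤ |log ‖w‖| * ‖w - w'‖ + ‖w - w'‖ := by
          grw [norm_add_le, norm_smul, norm_log_norm_sub_log_norm_smul_le h, norm_eq_abs]
    _ ≤ 2 / (1 - γ) * ‖w - w'‖ ^ γ + ‖w - w'‖ ^ γ :=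
          add_le_add
            (abs_log_mul_le_mul_rpow (norm_pos_iff.2 hw0) (by linarith) (norm_nonneg _) hd hγ0 hγ1)
            (self_le_rpow_of_le_one (norm_nonneg _) hd1 hγ1.le)
    _ = (2 / (1 - γ) + 1) * ‖w - w'‖ ^ γ := by ring

noncomputable def logRadial (C₁ C₂ : ℝ) (w : E) : E := (C₁ + C₂ * log ‖w‖) • w

theorem logRadial_sub_logRadial (C₁ C₂ : ℝ) (w w' : E) :
    logRadial C₁ C₂ w - logRadial C₁ C₂ w' =
      C₁ • (w - w') + C₂ • (log ‖w‖ • w - log ‖w'‖ • w') := by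
  simp only [logRadial, add_smul, mul_smul, smul_sub]
  abel

theorem holderOnWith_logRadial (C₁ C₂ : ℝ) {γ : ℝ≥0} (hγ0 : 0 < γ) (hγ1 : γ < 1) :
    ∃ C, HolderOnWith C γ (logRadial C₁ C₂ : E → E) (closedBall 0 (1 / 2)) := by
  have hγ0' : (0 : ℝ) < γ := hγ0
  have hγ1' : (γ : ℝ) < 1 := hγ1
  set K := |C₁| + |C₂| * (2 / (1 - γ) + 1)
  have hK : ∀ w w' : E, ‖w'‖ ≤ ‖w‖ → ‖w‖ ≤ 1 / 2 →
      ‖logRadial C₁ C₂ w - logRadial C₁ C₂ w'‖ ≤ K * ‖w - w'‖ ^ (γ : ℝ) := by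
    intro w w' h hw
    have hd1 : ‖w - w'‖ ≤ 1 := (norm_sub_le w w').trans (by linarith)
    rw [logRadial_sub_logRadial]
    calc _ ≤ |C₁| * ‖w - w'‖ + |C₂| * ‖log ‖w‖ • w - log ‖w'‖ • w'‖ := by
          grw [norm_add_le, norm_smul, norm_smul, norm_eq_abs, norm_eq_abs]
      _ ≤ |C₁| * ‖w - w'‖ ^ (γ : ℝ) + |C₂| * ((2 / (1 - γ) + 1) * ‖w - w'‖ ^ (γ : ℝ)) := by
          gcongr
          · exact self_le_rpow_of_le_one (norm_nonneg _) hd1 hγ1'.le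
          · exact norm_log_norm_smul_sub_le hγ0' hγ1' h hw
      _ = K * ‖w - w'‖ ^ (γ : ℝ) := by ring
  have hK0 : 0 ≤ K := add_nonneg (abs_nonneg _) (mul_nonneg (abs_nonneg _)
    (by linarith [div_pos two_pos (sub_pos.2 hγ1')]))
  refine ⟨K.toNNReal, HolderOnWith.of_dist_le fun w hw w' hw' => ?_⟩
  rw [mem_closedBall_zero_iff] at hw hw'
  rw [Real.coe_toNNReal _ hK0, dist_eq_norm, dist_eq_norm]
  rcases le_total ‖w'‖ ‖w‖ with h | h
  · exact hK w w' h hw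
  · rw [norm_sub_rev, norm_sub_rev w]
    exact hK w' w h hw'

theorem continuous_logRadial (C₁ C₂ : ℝ) : Continuous (logRadial C₁ C₂ : E → E) := by
  refine continuous_iff_continuousAt.2 fun w => ?_
  rcases eq_or_ne w 0 with rfl | hw
  · obtain ⟨C, hC⟩ := holderOnWith_logRadial (E := E) C₁ C₂ (γ := 1 / 2) (by norm_num)
      (by norm_num)
    exact (hC.continuousOn (by norm_num)).continuousAt (closedBall_mem_nhds _ (by norm_num))
  · exact (continuousAt_const.add (continuousAt_const.mul
      (continuousAt_id.norm.log (norm_ne_zero_iff.2 hw)))).smul continuousAt_id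

end LogRadial

theorem hasFDerivAt_logRadial {F : Type*} [NormedAddCommGroup F] [InnerProductSpace ℝ F]
    (C₁ C₂ : ℝ) {w : F} (hw : w ≠ 0) :
    HasFDerivAt (logRadial C₁ C₂)
      ((C₁ + C₂ * log ‖w‖) • ContinuousLinearMap.id ℝ F +
        (C₂ / ‖w‖ ^ 2) • (innerSL ℝ w).smulRight w) w := by
  have hlog : ∀ x : F, C₂ * log ‖x‖ = C₂ / 2 * log (‖x‖ ^ 2) := fun x => by
    rw [log_pow]; push_cast; ring
  have h := ((((hasFDerivAt_id w).norm_sq.log (by simpa using hw)).const_mul (C₂ / 2)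
    |>.const_add C₁).smul (hasFDerivAt_id w))
  simp only [← hlog, id] at h
  convert h using 1
  · rfl
  ext v
  simp [smul_smul]
  congr 1
  ring

noncomputable def quarterTurn : ℂ →L[ℝ] ℝ × ℝ :=
  Complex.equivRealProdCLM.toContinuousLinearMap ∘L ContinuousLinearMap.mul ℝ ℂ Complex.I

@[simp] theorem quarterTurn_apply (w : ℂ) : quarterTurn w = (-w.im, w.re) := by
  simp [quarterTurn]

noncomputable def logRotField (C₁ C₂ : ℝ) (z : ℝ × ℝ) : ℝ × ℝ :=
  ((C₁ + C₂ * log √(z.1 ^ 2 + z.2 ^ 2)) * -z.2, (C₁ + C₂ * log √(z.1 ^ 2 + z.2 ^ 2)) * z.1)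

theorem logRotField_eq_comp (C₁ C₂ : ℝ) :
    logRotField C₁ C₂ = quarterTurn ∘ logRadial C₁ C₂ ∘ Complex.equivRealProdCLM.symm := by
  ext z <;> simp [logRotField, logRadial, Complex.norm_eq_sqrt_sq_add_sq]

theorem continuous_logRotField (C₁ C₂ : ℝ) : Continuous (logRotField C₁ C₂) := by
  rw [logRotField_eq_comp]
  exact quarterTurn.continuous.comp ((continuous_logRadial C₁ C₂).comp
    Complex.equivRealProdCLM.symm.continuous)

theorem logRotField_zero (C₁ C₂ : ℝ) : logRotField C₁ C₂ 0 = 0 := by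
  simp [logRotField]

theorem exists_holderOnWith_logRotField (C₁ C₂ : ℝ) {γ : ℝ≥0} (hγ0 : 0 < γ) (hγ1 : γ < 1) :
    ∃ U ∈ 𝓝 (0 : ℝ × ℝ), ∃ C, HolderOnWith C γ (logRotField C₁ C₂) U := by
  set e := Complex.equivRealProdCLM.symm
  obtain ⟨C, hC⟩ := holderOnWith_logRadial (E := ℂ) C₁ C₂ hγ0 hγ1
  have h := quarterTurn.lipschitz.holderWith.comp_holderOnWith
    (hC.comp (e.lipschitz.holderWith.holderOnWith _) (mapsTo_preimage _ _))
  rw [one_mul, mul_one, ← logRotField_eq_comp] at h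
  refine ⟨_, ?_, _, h⟩
  exact e.continuous.continuousAt.preimage_mem_nhds (by
    simpa using closedBall_mem_nhds (0 : ℂ) (by norm_num : (0 : ℝ) < 1 / 2))

theorem norm_polar_le {r : ℝ} (hr : 0 ≤ r) (θ : ℝ) : ‖(r * cos θ, r * sin θ)‖ ≤ r := by
  rw [norm_prod_le_iff, norm_mul, norm_mul, norm_of_nonneg hr]
  exact ⟨mul_le_of_le_one_right hr (abs_cos_le_one θ), mul_le_of_le_one_right hr (abs_sin_le_one θ)⟩

theorem norm_equivRealProdCLM_symm_polar {r : ℝ} (hr : 0 ≤ r) (θ : ℝ) :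
    ‖Complex.equivRealProdCLM.symm (r * cos θ, r * sin θ)‖ = r := by
  simp [Complex.norm_eq_sqrt_sq_add_sq, mul_pow, ← mul_add, hr]

theorem polar_ne_zero {r : ℝ} (hr : 0 < r) (θ : ℝ) : (r * cos θ, r * sin θ) ≠ 0 := fun h => by
  simpa [h] using hr.trans_eq (norm_equivRealProdCLM_symm_polar hr.le θ).symm

theorem hasFDerivAt_logRotField (C₁ C₂ : ℝ) {z : ℝ × ℝ} (hz : z ≠ 0) :
    HasFDerivAt (logRotField C₁ C₂) (quarterTurn ∘L
      ((C₁ + C₂ * log ‖Complex.equivRealProdCLM.symm z‖) • ContinuousLinearMap.id ℝ ℂ +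
        (C₂ / ‖Complex.equivRealProdCLM.symm z‖ ^ 2) •
          (innerSL ℝ (Complex.equivRealProdCLM.symm z)).smulRight
            (Complex.equivRealProdCLM.symm z)) ∘L
      Complex.equivRealProdCLM.symm.toContinuousLinearMap) z := by
  rw [logRotField_eq_comp]
  exact quarterTurn.hasFDerivAt.comp z ((hasFDerivAt_logRadial C₁ C₂ (by simpa using hz)).comp z
    Complex.equivRealProdCLM.symm.hasFDerivAt)

theorem fderiv_logRotField_polar_apply (C₁ C₂ : ℝ) {r : ℝ} (hr : 0 < r) (θ : ℝ) :
    (fderiv ℝ (logRotField C₁ C₂) (r * cos θ, r * sin θ) (0, 1)).1 =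
      -(C₁ + C₂ * log r + C₂ * sin θ ^ 2) := by
  rw [(hasFDerivAt_logRotField C₁ C₂ (polar_ne_zero hr θ)).fderiv]
  simp [norm_equivRealProdCLM_symm_polar hr.le, Complex.inner, Complex.sin_ofReal_re]
  field_simp
  ring

theorem pdy_fst_logRotField_polar (C₁ C₂ : ℝ) {r : ℝ} (hr : 0 < r) (θ : ℝ) :
    pdy (fun w => (logRotField C₁ C₂ w).1) (r * cos θ, r * sin θ) =
      -(C₁ + C₂ * log r + C₂ * sin θ ^ 2) := by
  have hD := hasFDerivAt_logRotField C₁ C₂ (polar_ne_zero hr θ)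
  rw [pdy, hD.fst.fderiv, ← hD.fderiv]
  exact fderiv_logRotField_polar_apply C₁ C₂ hr θ

theorem abs_mul_log_add_le_norm_fderiv_logRotField (C₁ C₂ : ℝ) {r : ℝ} (hr : 0 < r) (θ : ℝ) :
    |C₂ * log r + (C₁ + C₂ * sin θ ^ 2)| ≤
      ‖fderiv ℝ (logRotField C₁ C₂) (r * cos θ, r * sin θ)‖ := by
  set L := fderiv ℝ (logRotField C₁ C₂) (r * cos θ, r * sin θ)
  calc |C₂ * log r + (C₁ + C₂ * sin θ ^ 2)| = ‖(L (0, 1)).1‖ := by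
        rw [fderiv_logRotField_polar_apply C₁ C₂ hr θ, norm_neg, norm_eq_abs]
        ring_nf
    _ ≤ ‖L (0, 1)‖ := norm_fst_le _
    _ ≤ ‖L‖ * ‖((0, 1) : ℝ × ℝ)‖ := L.le_opNorm _
    _ = ‖L‖ := by simp

theorem boundary_blowup_general (α β : ℝ) (hαβ : α < β)
    (C₁ C₂ : ℝ) (hC₂ : C₂ ≠ 0)
    (u : ℝ × ℝ → ℝ × ℝ)
    (hu : ∀ z : ℝ × ℝ, u z =
      ((C₁ + C₂ * Real.log (Real.sqrt (z.1^2 + z.2^2))) * (-z.2),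
       (C₁ + C₂ * Real.log (Real.sqrt (z.1^2 + z.2^2))) * z.1)) :
    -- (1) continuous extension to the closure, vanishing at the corner
    ((∃ ubar : ℝ × ℝ → ℝ × ℝ,
        ContinuousOn ubar (closure (coneDomain α β)) ∧
        EqOn ubar u (coneDomain α β)) ∧
      Tendsto u (nhdsWithin 0 (coneDomain α β)) (nhds 0)) ∧
    -- (2) local γ-Hölder continuity near the corner for every γ ∈ (0,1)
    (∀ γ : ℝ, 0 < γ → γ < 1 →
      ∃ U ∈ nhds (0 : ℝ × ℝ), ∃ M : ℝ,
        ∀ z ∈ U ∩ closure (coneDomain α β),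
          ∀ z' ∈ U ∩ closure (coneDomain α β),
            ‖u z - u z'‖ ≤ M * ‖z - z'‖ ^ γ) ∧
    -- (3) the gradient blows up at the corner
    ((∀ r θ : ℝ, 0 < r → α < θ → θ < β →
        pdy (fun w => (u w).1) (r * cos θ, r * sin θ)
          = -(C₁ + C₂ * Real.log r + C₂ * (sin θ)^2)) ∧
      ∀ M : ℝ, ∀ ε : ℝ, 0 < ε → ∃ z ∈ coneDomain α β,
        ‖z‖ < ε ∧ M < ‖fderiv ℝ u z‖) := by
  obtain rfl : u = logRotField C₁ C₂ := funext hu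
  have hcont := continuous_logRotField C₁ C₂
  refine ⟨⟨⟨_, hcont.continuousOn, eqOn_refl _ _⟩, ?_⟩, fun γ hγ0 hγ1 => ?_,
    fun r θ hr _ _ => pdy_fst_logRotField_polar C₁ C₂ hr θ, fun M ε hε => ?_⟩
  · simpa [logRotField_zero] using (hcont.tendsto 0).mono_left nhdsWithin_le_nhds
  · obtain ⟨U, hU, C, hC⟩ := exists_holderOnWith_logRotField C₁ C₂ (γ := γ.toNNReal)
      (by simpa using hγ0) (by simpa using hγ1)
    refine ⟨U, hU, C, fun z hz z' hz' => ?_⟩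
    simpa [dist_eq_norm, hγ0.le] using hC.dist_le hz.1 hz'.1
  · obtain ⟨r, hM, hr⟩ := ((tendsto_abs_mul_log_add_nhdsGT_zero hC₂
      (C₁ + C₂ * sin ((α + β) / 2) ^ 2) |>.eventually_gt_atTop M).and (Ioo_mem_nhdsGT hε)).exists
    refine ⟨_, ⟨r, _, hr.1, left_lt_add_div_two.2 hαβ, add_div_two_lt_right.2 hαβ, rfl⟩,
      (norm_polar_le hr.1.le _).trans_lt hr.2,
      hM.trans_le (abs_mul_log_add_le_norm_fderiv_logRotField C₁ C₂ hr.1 _)⟩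

/-- Boundary blow-up phenomenon: the field `u = (C₁ + C₂ ln r)(−y, x)` on a
cone domain extends continuously (with value `0`) to the corner, is locally
`γ`-Hölder continuous near the corner for every `γ ∈ (0,1)`, yet its gradient
is unbounded on every punctured neighborhood of the corner; in particular
`∂₂u₁ = −(C₁ + C₂ ln r + C₂ sin²θ)`. -/
theorem boundary_blowup (α β : ℝ) (hα : 0 ≤ α) (hαβ : α < β) (hβ : β ≤ 2 * π)
    (C₁ C₂ : ℝ) (hC₂ : C₂ ≠ 0)
    (u : ℝ × ℝ → ℝ × ℝ)
    (hu : ∀ z : ℝ × ℝ, u z =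
      ((C₁ + C₂ * Real.log (Real.sqrt (z.1^2 + z.2^2))) * (-z.2),
       (C₁ + C₂ * Real.log (Real.sqrt (z.1^2 + z.2^2))) * z.1)) :
    -- (1) continuous extension to the closure, vanishing at the corner
    ((∃ ubar : ℝ × ℝ → ℝ × ℝ,
        ContinuousOn ubar (closure (coneDomain α β)) ∧
        EqOn ubar u (coneDomain α β)) ∧
      Tendsto u (nhdsWithin 0 (coneDomain α β)) (nhds 0)) ∧
    -- (2) local γ-Hölder continuity near the corner for every γ ∈ (0,1)
    (∀ γ : ℝ, 0 < γ → γ < 1 →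
      ∃ U ∈ nhds (0 : ℝ × ℝ), ∃ M : ℝ,
        ∀ z ∈ U ∩ closure (coneDomain α β),
          ∀ z' ∈ U ∩ closure (coneDomain α β),
            ‖u z - u z'‖ ≤ M * ‖z - z'‖ ^ γ) ∧
    -- (3) the gradient blows up at the corner
    ((∀ r θ : ℝ, 0 < r → α < θ → θ < β →
        pdy (fun w => (u w).1) (r * cos θ, r * sin θ)
          = -(C₁ + C₂ * Real.log r + C₂ * (sin θ)^2)) ∧
      ∀ M : ℝ, ∀ ε : ℝ, 0 < ε → ∃ z ∈ coneDomain α β,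
        ‖z‖ < ε ∧ M < ‖fderiv ℝ u z‖) :=
  boundary_blowup_general α β hαβ C₁ C₂ hC₂ u hu
end

section
/- Let C₁, C₂, C₃, C₄, C₅ ∈ ℝ satisfy the constraints C₁C₃ + C₂C₄ − 2C₁C₂ = 0 and C₁C₄ − C₂C₃ + C₁² − C₂² = 0. Define on ℝ² the velocity u(x, y) = ((C₂+C₃)x² + (3C₂−C₃)y² + 2(C₁+C₄)xy, (C₄−3C₁)x² − (C₁+C₄)y² − 2(C₂+C₃)xy) and the pressure p(x, y) = (1/2)(C₁² + C₂² − C₃² − C₄²)(x² + y²)² + 8C₂x − 8C₁y + C₅. Then (u, p) solves the 2D steady incompressible Navier–Stokes equations −Δu + (u·∇)u + ∇p = 0, div u = 0 on all of ℝ². -/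
open Real Set

/-- Partial derivative in the first coordinate direction. -/
noncomputable def pdx (f : ℝ × ℝ → ℝ) (z : ℝ × ℝ) : ℝ := fderiv ℝ f z (1, 0)

/-- The 2D steady incompressible Navier--Stokes equations
`-Δu + (u·∇)u + ∇p = 0`, `div u = 0` on `Ω`. -/
def SteadyNS (u₁ u₂ p : ℝ × ℝ → ℝ) (Ω : Set (ℝ × ℝ)) : Prop :=
  ∀ z ∈ Ω,
    -(pdx (pdx u₁) z + pdy (pdy u₁) z)
        + (u₁ z * pdx u₁ z + u₂ z * pdy u₁ z) + pdx p z = 0 ∧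
    -(pdx (pdx u₂) z + pdy (pdy u₂) z)
        + (u₁ z * pdx u₂ z + u₂ z * pdy u₂ z) + pdy p z = 0 ∧
    pdx u₁ z + pdy u₂ z = 0

/-!
Every term of the system is polynomial. The Laplacian of `u` is the constant vector
`(8 C₂, -8 C₁)`, which cancels the gradient of the linear part of `p`; the convective term
`(u·∇)u` is cubic, and it cancels the gradient of the quartic part of `p` exactly up to a
combination of the two constraints.
-/

theorem pdx_eq_deriv {f : ℝ × ℝ → ℝ} (hf : Differentiable ℝ f) :
    pdx f = fun z => deriv (fun t => f (t, z.2)) z.1 := by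
  funext z
  have hline : HasDerivAt (fun t : ℝ => (t, z.2)) ((1 : ℝ), (0 : ℝ)) z.1 :=
    (hasDerivAt_id z.1).prodMk (hasDerivAt_const z.1 z.2)
  exact ((hf z).hasFDerivAt.comp_hasDerivAt z.1 hline).deriv.symm

theorem pdy_eq_deriv {f : ℝ × ℝ → ℝ} (hf : Differentiable ℝ f) :
    pdy f = fun z => deriv (fun t => f (z.1, t)) z.2 := by
  funext z
  have hline : HasDerivAt (fun t : ℝ => (z.1, t)) ((0 : ℝ), (1 : ℝ)) z.2 :=
    (hasDerivAt_const z.2 z.1).prodMk (hasDerivAt_id z.2)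
  exact ((hf z).hasFDerivAt.comp_hasDerivAt z.2 hline).deriv.symm

/-- The constrained quadratic field with its pressure solves the 2D steady
Navier--Stokes equations on all of `ℝ²`. -/
theorem quadratic_solution (C₁ C₂ C₃ C₄ C₅ : ℝ)
    (h1 : C₁ * C₃ + C₂ * C₄ - 2 * C₁ * C₂ = 0)
    (h2 : C₁ * C₄ - C₂ * C₃ + C₁^2 - C₂^2 = 0) :
    SteadyNS
      (fun z => (C₂ + C₃) * z.1^2 + (3 * C₂ - C₃) * z.2^2
          + 2 * (C₁ + C₄) * z.1 * z.2)
      (fun z => (C₄ - 3 * C₁) * z.1^2 - (C₁ + C₄) * z.2^2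
          - 2 * (C₂ + C₃) * z.1 * z.2)
      (fun z => (1/2) * (C₁^2 + C₂^2 - C₃^2 - C₄^2) * (z.1^2 + z.2^2)^2
          + 8 * C₂ * z.1 - 8 * C₁ * z.2 + C₅)
      Set.univ := by
  intro z _
  simp (disch := fun_prop) only [pdx_eq_deriv, pdy_eq_deriv, deriv_fun_add, deriv_fun_sub,
    deriv_fun_mul, deriv_fun_pow, deriv_const', deriv_id'', deriv_const_mul_id']
  refine ⟨?_, ?_, ?_⟩
  · linear_combination (8 * z.1 ^ 2 * z.2) * h1 + (4 * z.1 * z.2 ^ 2 - 4 * z.1 ^ 3) * h2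
  · linear_combination (8 * z.1 * z.2 ^ 2) * h1 + (4 * z.2 ^ 3 - 4 * z.1 ^ 2 * z.2) * h2
  · ring
end
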